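/- An MSC M = (E, →, ◁, λ) is a 1-n MSC if and only if the relation ⪯_1n := (→ ∪ ◁ ∪ ↦_1n)* is a partial order on E (equivalently, the relation → ∪ ◁ ∪ ↦_1n is acyclic). -/

import Mathlib

namespace MSCPaper

/-- A communication action: either `send p q m` (process `p` sends message `m`
to process `q`) or `recv p q m` (process `q` receives message `m` from `p`). -/
inductive Action (P Msg : Type) : Type where
  | send (p q : P) (m : Msg) : Action P Msg
  | recv (p q : P) (m : Msg) : Action P Msg

namespace Action

variable {P Msg : Type}

/-- The process executing an action: the sender of a send, the receiver of a receive. -/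
def exec : Action P Msg → P
  | send p _ _ => p
  | recv _ q _ => q

def isSend (a : Action P Msg) : Prop := ∃ p q m, a = send p q m

def isRecv (a : Action P Msg) : Prop := ∃ p q m, a = recv p q m

/-- `a` is a send action whose destination is `q`. -/
def sendTo (a : Action P Msg) (q : P) : Prop := ∃ p m, a = send p q m

/-- `a` is a send action from `p` to `q`. -/
def isSendFromTo (a : Action P Msg) (p q : P) : Prop := ∃ m, a = send p q m

/-- `a` is a receive action of a message from `p` to `q`. -/
def isRecvFromTo (a : Action P Msg) (p q : P) : Prop := ∃ m, a = recv p q m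

end Action

/-- The data of a message sequence chart: a set of events `E`, the process
successor relation `next` (→), the message relation `msg` (◁), and the
labelling `lbl` (λ). -/
structure PreMSC (P Msg : Type) where
  E : Type
  next : E → E → Prop
  msg : E → E → Prop
  lbl : E → Action P Msg

namespace PreMSC

variable {P Msg : Type}

/-- One step of the happens-before relation: `→ ∪ ◁`. -/
def step (M : PreMSC P Msg) (a b : M.E) : Prop := M.next a b ∨ M.msg a b

/-- The happens-before relation `≤ := (→ ∪ ◁)*`. -/
def hb (M : PreMSC P Msg) : M.E → M.E → Prop := Relation.ReflTransGen M.step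

/-- The strict happens-before relation `< := (→ ∪ ◁)⁺`. -/
def shb (M : PreMSC P Msg) : M.E → M.E → Prop := Relation.TransGen M.step

/-- An event is matched if it has a `◁`-successor. -/
def Matched (M : PreMSC P Msg) (e : M.E) : Prop := ∃ f, M.msg e f

/-- The axioms making a `PreMSC` an MSC. -/
structure IsMSC (M : PreMSC P Msg) : Prop where
  /-- The set of events is finite. -/
  finite : Finite M.E
  /-- `next` only relates events executed by the same process. -/
  next_exec : ∀ e f, M.next e f → (M.lbl e).exec = (M.lbl f).exec
  /-- Events executed by the same process are totally ordered by `next⁺`. -/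
  proc_total : ∀ e f, (M.lbl e).exec = (M.lbl f).exec → e ≠ f →
    Relation.TransGen M.next e f ∨ Relation.TransGen M.next f e
  /-- `next` is the immediate successor relation of the total order `next⁺`
  on each process line. -/
  next_cover : ∀ e f, M.next e f →
    ¬ ∃ g, Relation.TransGen M.next e g ∧ Relation.TransGen M.next g f
  /-- `◁` relates matching send/receive events. -/
  msg_lbl : ∀ e f, M.msg e f → ∃ p q m, M.lbl e = .send p q m ∧ M.lbl f = .recv p q m
  /-- Every receive event has exactly one `◁`-predecessor. -/
  recv_matched : ∀ f, (M.lbl f).isRecv → ∃! e, M.msg e f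
  /-- Every event has at most one `◁`-successor. -/
  msg_functional : ∀ e f f', M.msg e f → M.msg e f' → f = f'
  /-- The happens-before relation `(→ ∪ ◁)*` is a partial order, i.e. the
  relation `→ ∪ ◁` is acyclic. -/
  hb_po : ∀ e, ¬ Relation.TransGen M.step e e

/-- `lin` is a linearization of `M`: a reflexive total order containing
happens-before. -/
structure IsLin (M : PreMSC P Msg) (lin : M.E → M.E → Prop) : Prop where
  refl : ∀ e, lin e e
  trans : ∀ e f g, lin e f → lin f g → lin e g
  antisymm : ∀ e f, lin e f → lin f e → e = f
  total : ∀ e f, lin e f ∨ lin f e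
  hb_le : ∀ e f, M.hb e f → lin e f

/-- `lin` satisfies the mailbox (n-1) condition: any two sends to the same
destination in `lin`-order are either both matched with receives in the same
order, or the later one is unmatched. -/
def MailboxCond (M : PreMSC P Msg) (lin : M.E → M.E → Prop) : Prop :=
  ∀ s s' q, (M.lbl s).sendTo q → (M.lbl s').sendTo q → lin s s' →
    (∃ r r', M.msg s r ∧ M.msg s' r' ∧ lin r r') ∨ ¬ M.Matched s'

/-- `lin` satisfies the 1-n condition: any two sends executed by the same
process, in process order, are either both matched with receives in the same
`lin`-order, or the later one is unmatched. -/
def OneNCond (M : PreMSC P Msg) (lin : M.E → M.E → Prop) : Prop :=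
  ∀ s s', (M.lbl s).isSend → (M.lbl s').isSend →
    (M.lbl s).exec = (M.lbl s').exec → Relation.TransGen M.next s s' →
    (∃ r r', M.msg s r ∧ M.msg s' r' ∧ lin r r') ∨ ¬ M.Matched s'

/-- `lin` satisfies the n-n condition: any two sends in `lin`-order are either
both matched with receives in the same `lin`-order, or the later one is
unmatched. -/
def NNCond (M : PreMSC P Msg) (lin : M.E → M.E → Prop) : Prop :=
  ∀ s s', (M.lbl s).isSend → (M.lbl s').isSend → lin s s' →
    (∃ r r', M.msg s r ∧ M.msg s' r' ∧ lin r r') ∨ ¬ M.Matched s'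

/-- An n-1 (mailbox) MSC: one having a mailbox linearization. -/
def IsMailbox (M : PreMSC P Msg) : Prop := ∃ lin, M.IsLin lin ∧ M.MailboxCond lin

/-- A 1-n MSC: one having a 1-n linearization. -/
def IsOneN (M : PreMSC P Msg) : Prop := ∃ lin, M.IsLin lin ∧ M.OneNCond lin

/-- An n-n MSC: one having an n-n linearization. -/
def IsNN (M : PreMSC P Msg) : Prop := ∃ lin, M.IsLin lin ∧ M.NNCond lin

/-- A peer-to-peer (1-1) MSC. -/
def IsPP (M : PreMSC P Msg) : Prop :=
  ∀ s s' p q, (M.lbl s).isSendFromTo p q → (M.lbl s').isSendFromTo p q →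
    Relation.TransGen M.next s s' →
    (∃ r r', M.msg s r ∧ M.msg s' r' ∧ Relation.TransGen M.next r r') ∨ ¬ M.Matched s'

/-- A causally ordered MSC. -/
def IsCO (M : PreMSC P Msg) : Prop :=
  ∀ s s' q, (M.lbl s).sendTo q → (M.lbl s').sendTo q → M.hb s s' →
    (∃ r r', M.msg s r ∧ M.msg s' r' ∧ Relation.ReflTransGen M.next r r') ∨ ¬ M.Matched s'

/-- An RSC MSC: no unmatched send events and some linearization in which every
send is immediately followed by its matching receive. -/
def IsRSC (M : PreMSC P Msg) : Prop :=
  (∀ e, (M.lbl e).isSend → M.Matched e) ∧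
  ∃ lin, M.IsLin lin ∧
    ∀ s r, M.msg s r → lin s r ∧ ∀ e, lin s e → lin e r → e = s ∨ e = r

/-- The relation `↦_mb`. -/
def mbRel (M : PreMSC P Msg) (s s' : M.E) : Prop :=
  (∃ q, (M.lbl s).sendTo q ∧ (M.lbl s').sendTo q) ∧
  ((M.Matched s ∧ ¬ M.Matched s') ∨
    ∃ r₁ r₂, M.msg s r₁ ∧ M.msg s' r₂ ∧ Relation.TransGen M.next r₁ r₂)

/-- The relation `↦_1n`. -/
def onenRel (M : PreMSC P Msg) (e₁ e₂ : M.E) : Prop :=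
  ((M.lbl e₁).isSend ∧ (M.lbl e₂).isSend ∧ (M.lbl e₁).exec = (M.lbl e₂).exec ∧
    M.Matched e₁ ∧ ¬ M.Matched e₂) ∨
  (∃ s₁ s₂, M.msg s₁ e₁ ∧ M.msg s₂ e₂ ∧ (M.lbl s₁).exec = (M.lbl s₂).exec ∧
    Relation.TransGen M.next s₁ s₂)

/-- One step of `≺_mb`: the relation `→ ∪ ◁ ∪ ↦_mb`. -/
def mbStep (M : PreMSC P Msg) (a b : M.E) : Prop := M.next a b ∨ M.msg a b ∨ M.mbRel a b

/-- One step of `⪯_1n`: the relation `→ ∪ ◁ ∪ ↦_1n`. -/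
def onenStep (M : PreMSC P Msg) (a b : M.E) : Prop := M.next a b ∨ M.msg a b ∨ M.onenRel a b

/-- One step of `◅`: the relation `→ ∪ ◁ ∪ ↦_mb ∪ ↦_1n`. -/
def nnStep (M : PreMSC P Msg) (a b : M.E) : Prop :=
  M.next a b ∨ M.msg a b ∨ M.mbRel a b ∨ M.onenRel a b

/-- The relation `◅ := (→ ∪ ◁ ∪ ↦_mb ∪ ↦_1n)⁺`. -/
def nnRel (M : PreMSC P Msg) : M.E → M.E → Prop := Relation.TransGen M.nnStep

/-- The relation `⋈`. -/
def nnBowtie (M : PreMSC P Msg) (e₁ e₂ : M.E) : Prop :=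
  M.nnRel e₁ e₂ ∨
  ((∃ s₁ s₂, M.msg s₁ e₁ ∧ M.msg s₂ e₂ ∧ M.nnRel s₁ s₂) ∧ ¬ M.nnRel e₁ e₂) ∨
  ((∃ r₁ r₂, M.msg e₁ r₁ ∧ M.msg e₂ r₂ ∧ M.nnRel r₁ r₂) ∧ ¬ M.nnRel e₁ e₂) ∨
  ((M.lbl e₁).isSend ∧ M.Matched e₁ ∧ (M.lbl e₂).isSend ∧ ¬ M.Matched e₂ ∧
    ¬ M.nnRel e₁ e₂)

/-- `lin` is `k`-bounded: for every send event `e` from `p` to `q`, the number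
of sends from `p` to `q` up to `e` minus the number of receives of messages
from `p` to `q` up to `e` is at most `k`. -/
def KBounded (M : PreMSC P Msg) (k : ℕ) (lin : M.E → M.E → Prop) : Prop :=
  ∀ e p q m, M.lbl e = .send p q m →
    Set.ncard {f | lin f e ∧ (M.lbl f).isSendFromTo p q} ≤
      Set.ncard {f | lin f e ∧ (M.lbl f).isRecvFromTo p q} + k

/-- The relation `R_k` (`⇝_k` of Lohrey–Muscholl, asynchronous version):
`r R_k s` iff there is a chain `s₁ →⁺ … →⁺ s_k →⁺ s` of sends from `p` to `q`,
at least one of them matched, `r` is a receive matching one of them, and `r`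
is `→*`-before every receive matching one of them. -/
def RkRel (M : PreMSC P Msg) (k : ℕ) (r s : M.E) : Prop :=
  ∃ (p q : P) (σ : Fin (k + 1) → M.E),
    σ (Fin.last k) = s ∧
    (∀ i : Fin k, Relation.TransGen M.next (σ i.castSucc) (σ i.succ)) ∧
    (∀ i, (M.lbl (σ i)).isSendFromTo p q) ∧
    (∃ i, M.Matched (σ i)) ∧
    (∃ i, M.msg (σ i) r) ∧
    (∀ i f, M.msg (σ i) f → Relation.ReflTransGen M.next r f)

/-- `e` is the `n`-th (1-indexed) send event of channel `(p,q)`. -/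
def nthSend (M : PreMSC P Msg) (p q : P) (n : ℕ) (e : M.E) : Prop :=
  (M.lbl e).isSendFromTo p q ∧
  Set.ncard {f | (M.lbl f).isSendFromTo p q ∧ Relation.ReflTransGen M.next f e} = n

/-- `e` is the `n`-th (1-indexed) receive event of channel `(p,q)`. -/
def nthRecv (M : PreMSC P Msg) (p q : P) (n : ℕ) (e : M.E) : Prop :=
  (M.lbl e).isRecvFromTo p q ∧
  Set.ncard {f | (M.lbl f).isRecvFromTo p q ∧ Relation.ReflTransGen M.next f e} = n

/-- The relation `≺_B` for bound `k`: `r ≺_B s` iff for some `i ≥ 1` and some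
channel `(p,q)`, `r` is the `i`-th receive and `s` the `(i+k)`-th send of `(p,q)`. -/
def BRel (M : PreMSC P Msg) (k : ℕ) (r s : M.E) : Prop :=
  ∃ (p q : P) (i : ℕ), 1 ≤ i ∧ M.nthRecv p q i r ∧ M.nthSend p q (i + k) s

/-- For every channel `(p,q)` there are at most `k` unmatched sends from `p` to `q`. -/
def UnmatchedBounded (M : PreMSC P Msg) (k : ℕ) : Prop :=
  ∀ p q : P, Set.ncard {e | (M.lbl e).isSendFromTo p q ∧ ¬ M.Matched e} ≤ k

/-- The restriction of an MSC to a subset of its events. -/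
def restrict (M : PreMSC P Msg) (S : Set M.E) : PreMSC P Msg where
  E := S
  next := fun a b => M.next a.val b.val
  msg := fun a b => M.msg a.val b.val
  lbl := fun a => M.lbl a.val

/-- `S` is downward-closed for happens-before. -/
def DownClosed (M : PreMSC P Msg) (S : Set M.E) : Prop :=
  ∀ e f, M.hb e f → f ∈ S → e ∈ S

/-- `S` is downward-closed for `⪯_1n := (→ ∪ ◁ ∪ ↦_1n)*`. -/
def OneNDownClosed (M : PreMSC P Msg) (S : Set M.E) : Prop :=
  ∀ e f, Relation.ReflTransGen M.onenStep e f → f ∈ S → e ∈ S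

/-- The MSC contains a crown: a cyclic sequence of matched message pairs
`(s_i, r_i)`, of length at least 2, with `s_i < r_{i+1}` (indices mod `k`). -/
def HasCrown (M : PreMSC P Msg) : Prop :=
  ∃ (k : ℕ) (hk : 2 ≤ k) (s r : Fin k → M.E),
    (∀ i, M.msg (s i) (r i)) ∧
    ∀ i : Fin k, M.shb (s i) (r ⟨(i.val + 1) % k, Nat.mod_lt _ (by omega)⟩)

end PreMSC

end MSCPaper

/-! A 1-n linearization orders every `↦_1n` pair strictly (for two sends by the 1-n condition
and process totality, for two receives by the 1-n condition applied to their sends), so it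
contains `⪯_1n` and the latter is acyclic. Conversely, when `⪯_1n` is a partial order, any
linear extension of it (Szpilrajn) is a 1-n linearization: a matched send after an unmatched
one on the same process would close a `↦_1n`-cycle, and receives of messages sent in process
order are `↦_1n`-ordered. -/

namespace MSCPaper

open Relation

theorem isPartialOrder_reflTransGen_of_acyclic {α : Type*} {r : α → α → Prop}
    (h : ∀ a, ¬ TransGen r a a) : IsPartialOrder α (ReflTransGen r) where
  antisymm a b hab hba := by
    rcases reflTransGen_iff_eq_or_transGen.mp hab with rfl | hab
    · rfl
    · exact absurd (TransGen.trans_right hba hab) (h b)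

namespace PreMSC

variable {P Msg : Type} {M : PreMSC P Msg}

theorem hb_of_transGen_next {a b : M.E} (h : TransGen M.next a b) : M.hb a b :=
  (TransGen.mono (fun _ _ => Or.inl) _ _ h).to_reflTransGen

namespace IsMSC

theorem isSend_of_msg (hM : M.IsMSC) {s r : M.E} (h : M.msg s r) : (M.lbl s).isSend := by
  obtain ⟨p, q, m, hs, -⟩ := hM.msg_lbl s r h
  exact ⟨p, q, m, hs⟩

theorem msg_left_unique (hM : M.IsMSC) {s₁ s₂ r : M.E} (h₁ : M.msg s₁ r) (h₂ : M.msg s₂ r) :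
    s₁ = s₂ := by
  obtain ⟨p, q, m, -, hr⟩ := hM.msg_lbl s₁ r h₁
  obtain ⟨s, -, hs⟩ := hM.recv_matched r ⟨p, q, m, hr⟩
  exact (hs s₁ h₁).trans (hs s₂ h₂).symm

theorem not_transGen_next_self (hM : M.IsMSC) (e : M.E) : ¬ TransGen M.next e e := fun h =>
  hM.hb_po e (TransGen.mono (fun _ _ => Or.inl) _ _ h)

theorem ne_of_step (hM : M.IsMSC) {a b : M.E} (h : M.step a b) : a ≠ b := by
  rintro rfl
  exact hM.hb_po a (.single h)

end IsMSC

namespace IsLin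

variable {lin : M.E → M.E → Prop}

theorem lt_of_transGen {r : M.E → M.E → Prop} (hlin : M.IsLin lin)
    (hr : ∀ a b, r a b → lin a b ∧ a ≠ b) {a b : M.E} (h : TransGen r a b) :
    lin a b ∧ a ≠ b := by
  induction h with
  | single h => exact hr _ _ h
  | tail _ hbc ih =>
    obtain ⟨hab, -⟩ := ih
    obtain ⟨hbc, hne⟩ := hr _ _ hbc
    refine ⟨hlin.trans _ _ _ hab hbc, ?_⟩
    rintro rfl
    exact hne (hlin.antisymm _ _ hbc hab)

theorem lt_of_step (hM : M.IsMSC) (hlin : M.IsLin lin) {a b : M.E} (h : M.step a b) :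
    lin a b ∧ a ≠ b :=
  ⟨hlin.hb_le a b (.single h), hM.ne_of_step h⟩

theorem lt_of_onenRel (hM : M.IsMSC) (hlin : M.IsLin lin) (hcond : M.OneNCond lin)
    {a b : M.E} (h : M.onenRel a b) : lin a b ∧ a ≠ b := by
  rcases h with ⟨ha, hb, hexec, hma, hmb⟩ | ⟨s₁, s₂, h₁, h₂, hexec, hs⟩
  · have hne : a ≠ b := by rintro rfl; exact hmb hma
    refine ⟨?_, hne⟩
    rcases hM.proc_total a b hexec hne with hab | hba
    · exact hlin.hb_le a b (hb_of_transGen_next hab)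
    · rcases hcond b a hb ha hexec.symm hba with ⟨r, -, hr, -⟩ | hna
      · exact absurd ⟨r, hr⟩ hmb
      · exact absurd hma hna
  · rcases hcond s₁ s₂ (hM.isSend_of_msg h₁) (hM.isSend_of_msg h₂) hexec hs with
      ⟨r₁, r₂, hr₁, hr₂, hlin₁₂⟩ | hna
    · obtain rfl := hM.msg_functional s₁ r₁ a hr₁ h₁
      obtain rfl := hM.msg_functional s₂ r₂ b hr₂ h₂
      refine ⟨hlin₁₂, ?_⟩
      rintro rfl
      obtain rfl := hM.msg_left_unique h₁ h₂
      exact hM.not_transGen_next_self s₁ hs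
    · exact absurd ⟨b, h₂⟩ hna

theorem lt_of_onenStep (hM : M.IsMSC) (hlin : M.IsLin lin) (hcond : M.OneNCond lin)
    {a b : M.E} (h : M.onenStep a b) : lin a b ∧ a ≠ b := by
  rcases h with h | h | h
  · exact hlin.lt_of_step hM (Or.inl h)
  · exact hlin.lt_of_step hM (Or.inr h)
  · exact hlin.lt_of_onenRel hM hcond h

end IsLin

theorem IsOneN.onenStep_acyclic (hM : M.IsMSC) (h : M.IsOneN) (e : M.E) :
    ¬ TransGen M.onenStep e e := by
  obtain ⟨lin, hlin, hcond⟩ := h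
  exact fun he => (hlin.lt_of_transGen (fun _ _ => hlin.lt_of_onenStep hM hcond) he).2 rfl

theorem isLin_of_isLinearOrder {lin : M.E → M.E → Prop} [IsLinearOrder M.E lin]
    (hle : M.hb ≤ lin) : M.IsLin lin where
  refl := refl_of lin
  trans _ _ _ := trans_of lin
  antisymm _ _ := antisymm_of lin
  total := total_of lin
  hb_le := hle

theorem oneNCond_of_acyclic {lin : M.E → M.E → Prop} (hacyc : ∀ e, ¬ TransGen M.onenStep e e)
    (hle : ∀ a b, M.onenRel a b → lin a b) : M.OneNCond lin := by
  intro s s' hs hs' hexec hss'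
  by_cases hm' : M.Matched s'
  · obtain ⟨r', hr'⟩ := hm'
    obtain ⟨r, hr⟩ : M.Matched s := by
      by_contra hm
      have hs's : M.onenRel s' s := Or.inl ⟨hs', hs, hexec.symm, ⟨r', hr'⟩, hm⟩
      exact hacyc s ((TransGen.mono (fun _ _ => Or.inl) _ _ hss').tail (Or.inr (Or.inr hs's)))
    exact Or.inl ⟨r, r', hr, hr', hle r r' (Or.inr ⟨s, s', hr, hr', hexec, hss'⟩)⟩
  · exact Or.inr hm'

theorem isOneN_of_acyclic (hacyc : ∀ e, ¬ TransGen M.onenStep e e) : M.IsOneN := by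
  have := isPartialOrder_reflTransGen_of_acyclic hacyc
  obtain ⟨lin, _, hle⟩ := extend_partialOrder (ReflTransGen M.onenStep)
  refine ⟨lin, isLin_of_isLinearOrder fun a b hab => hle a b ?_, oneNCond_of_acyclic hacyc
    fun a b hab => hle a b (.single (Or.inr (Or.inr hab)))⟩
  exact ReflTransGen.mono (fun _ _ => Or.imp_right Or.inl) _ _ hab

end PreMSC

/-- An MSC is a 1-n MSC iff `⪯_1n := (→ ∪ ◁ ∪ ↦_1n)*` is a partial
order, equivalently `→ ∪ ◁ ∪ ↦_1n` is acyclic. -/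
theorem oneN_iff_onenStep_acyclic {P Msg : Type} (M : PreMSC P Msg) (hM : M.IsMSC) :
    M.IsOneN ↔ ∀ e, ¬ Relation.TransGen M.onenStep e e :=
  ⟨PreMSC.IsOneN.onenStep_acyclic hM, PreMSC.isOneN_of_acyclic⟩

end MSCPaper
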